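/- The map CPila : ℝ → ℝ² defined by CPila(x) = (1/1.06)·(Pila₅(x − 0.2), Pila₅(−x − 0.2)) is 1-Lipschitz, where Pila₅(x) = x for x ≥ 0 and Pila₅(x) = (12.5x³ − 5x² + x)·exp(5x) for x < 0, and ℝ² carries the Euclidean norm. -/

import Mathlib

/-- The Pila activation function with parameter `k`. -/
noncomputable def Pila (k x : ℝ) : ℝ :=
  if 0 ≤ x then x else ((k ^ 2 / 2) * x ^ 3 - k * x ^ 2 + x) * Real.exp (k * x)

/-- Concatenated Pila: `CPila x = (1/1.06) • (Pila₅ (x - 0.2), Pila₅ (-x - 0.2))`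
as a map `ℝ → ℝ²` (Euclidean norm). -/
noncomputable def CPila (x : ℝ) : EuclideanSpace ℝ (Fin 2) :=
  (1 / 1.06 : ℝ) •
    (WithLp.equiv 2 (Fin 2 → ℝ)).symm ![Pila 5 (x - 0.2), Pila 5 (-x - 0.2)]

/-!
For every `k`, the derivative of `Pila k` is `1` on `t ≥ 0` and `g (-k t)` on `t < 0`, where
`g u = (1 + u + u²/2 - u³/2) e⁻ᵘ`. By the mean value theorem it suffices to show
`Pila₅'(x - 0.2)² + Pila₅'(-x - 0.2)² ≤ 1.06²`.

For `|x| ≥ 0.2` one slope is `1` and the other is `g u` with `u ≥ 2`. Since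
`g' u = u² (u - 4) / 2 · e⁻ᵘ`, the global minimum of `g` is `g 4 = -19 e⁻⁴ ≈ -0.348`, while
`g u ≤ e⁻ᵘ` for `u ≥ 2`; hence `(g u)² ≤ 1.06² - 1`.

For `|x| < 0.2` the two slopes are `g (1 - 5x)` and `g (1 + 5x)`; bounding `e⁻ᵘ` by the inverse
of the quartic Taylor polynomial of `eᵘ` turns the claim into a polynomial inequality.
-/

open Real Set

noncomputable def pilaSlopePoly (u : ℝ) : ℝ := 1 + u + u ^ 2 / 2 - u ^ 3 / 2

noncomputable def pilaSlope (u : ℝ) : ℝ := pilaSlopePoly u * exp (-u)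

noncomputable def pilaDeriv (k t : ℝ) : ℝ := if 0 ≤ t then 1 else pilaSlope (-(k * t))

theorem hasDerivAt_pila_neg_branch (k t : ℝ) :
    HasDerivAt (fun y => ((k ^ 2 / 2) * y ^ 3 - k * y ^ 2 + y) * exp (k * y))
      (pilaSlope (-(k * t))) t := by
  have hpoly : HasDerivAt (fun y => (k ^ 2 / 2) * y ^ 3 - k * y ^ 2 + y)
      ((k ^ 2 / 2) * (3 * t ^ 2) - k * (2 * t) + 1) t := by
    refine ((((hasDerivAt_pow 3 t).const_mul (k ^ 2 / 2)).sub
      ((hasDerivAt_pow 2 t).const_mul k)).add (hasDerivAt_id' t)).congr_deriv ?_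
    norm_num
  have hexp : HasDerivAt (fun y => exp (k * y)) (exp (k * t) * k) t :=
    (hasDerivAt_exp (k * t)).comp t ((hasDerivAt_id t).const_mul k |>.congr_deriv (mul_one k))
  refine (hpoly.mul hexp).congr_deriv ?_
  simp only [pilaSlope, pilaSlopePoly, neg_neg]
  ring

theorem hasDerivAt_pila (k t : ℝ) : HasDerivAt (Pila k) (pilaDeriv k t) t := by
  have hleft : ∀ t ≤ 0, HasDerivWithinAt (Pila k) (pilaSlope (-(k * t))) (Iic 0) t :=
    fun t ht => (hasDerivAt_pila_neg_branch k t).hasDerivWithinAt.congr_of_mem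
      (fun y hy => by
        rcases (mem_Iic.1 hy).lt_or_eq with hy | rfl
        · simp [Pila, hy.not_ge]
        · simp [Pila]) ht
  have hright : ∀ t ≥ 0, HasDerivWithinAt (Pila k) 1 (Ici 0) t :=
    fun t ht => (hasDerivAt_id t).hasDerivWithinAt.congr_of_mem
      (fun y hy => if_pos (mem_Ici.1 hy)) ht
  rcases lt_trichotomy t 0 with ht | rfl | ht
  · rw [pilaDeriv, if_neg ht.not_ge]
    exact (hleft t ht.le).hasDerivAt (Iic_mem_nhds ht)
  · have h1 : pilaSlope (-(k * 0)) = 1 := by simp [pilaSlope, pilaSlopePoly]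
    rw [pilaDeriv, if_pos le_rfl, ← hasDerivWithinAt_univ, ← Iic_union_Ici]
    exact (h1 ▸ hleft 0 le_rfl).union (hright 0 le_rfl)
  · rw [pilaDeriv, if_pos ht.le]
    exact (hright t ht.le).hasDerivAt (Ici_mem_nhds ht)

theorem hasDerivAt_pilaSlope (u : ℝ) :
    HasDerivAt pilaSlope (u ^ 2 * (u - 4) / 2 * exp (-u)) u := by
  have hpoly : HasDerivAt pilaSlopePoly (1 + u - 3 / 2 * u ^ 2) u := by
    refine ((((hasDerivAt_const u 1).add (hasDerivAt_id' u)).add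
      ((hasDerivAt_pow 2 u).div_const 2)).sub ((hasDerivAt_pow 3 u).div_const 2)).congr_deriv ?_
    norm_num
    ring
  refine (hpoly.mul (hasDerivAt_neg u).exp).congr_deriv ?_
  simp only [pilaSlopePoly]
  ring

theorem pilaSlope_four_le (u : ℝ) : pilaSlope 4 ≤ pilaSlope u := by
  have hcont : Continuous pilaSlope :=
    continuous_iff_continuousAt.2 fun u => (hasDerivAt_pilaSlope u).continuousAt
  rcases le_total u 4 with hu | hu
  · refine antitoneOn_of_hasDerivWithinAt_nonpos (convex_Iic 4) hcont.continuousOn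
      (fun x _ => (hasDerivAt_pilaSlope x).hasDerivWithinAt) (fun x hx => ?_) hu self_mem_Iic hu
    rw [interior_Iic, mem_Iio] at hx
    have hx4 : x ^ 2 * (x - 4) ≤ 0 := mul_nonpos_of_nonneg_of_nonpos (sq_nonneg x) (by linarith)
    exact mul_nonpos_of_nonpos_of_nonneg (by linarith) (exp_pos _).le
  · refine monotoneOn_of_hasDerivWithinAt_nonneg (convex_Ici 4) hcont.continuousOn
      (fun x _ => (hasDerivAt_pilaSlope x).hasDerivWithinAt) (fun x hx => ?_) self_mem_Ici hu hu
    rw [interior_Ici, mem_Ioi] at hx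
    have hx4 : 0 ≤ x ^ 2 * (x - 4) := mul_nonneg (sq_nonneg x) (by linarith)
    exact mul_nonneg (by linarith) (exp_pos _).le

theorem sq_pilaSlope_le_of_two_le {u : ℝ} (hu : 2 ≤ u) : pilaSlope u ^ 2 ≤ 1.06 ^ 2 - 1 := by
  have hlow : -0.3515 ≤ pilaSlope u := by
    have he : 54.1 ≤ exp 4 := by
      rw [show (4 : ℝ) = (4 : ℕ) by norm_num, ← exp_one_pow]
      calc (54.1 : ℝ) ≤ 2.7182818283 ^ 4 := by norm_num
        _ ≤ exp 1 ^ 4 := pow_le_pow_left₀ (by norm_num) exp_one_gt_d9.le 4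
    have h4 : pilaSlope 4 = -19 / exp 4 := by
      rw [pilaSlope, pilaSlopePoly, exp_neg]; ring
    have h19 : -0.3515 ≤ -19 / exp 4 := by
      rw [neg_div, neg_le_neg_iff, div_le_iff₀ (exp_pos 4)]; linarith
    linarith [pilaSlope_four_le u]
  have hup : pilaSlope u ≤ 0.3515 := by
    have hpoly : pilaSlopePoly u ≤ 1 := by
      have h : 0 ≤ u * ((u - 2) * (u + 1)) := mul_nonneg (by linarith) (by nlinarith)
      rw [pilaSlopePoly]; nlinarith
    have he : exp (-u) ≤ 1 / 3 := by
      rw [exp_neg, inv_eq_one_div]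
      exact one_div_le_one_div_of_le (by norm_num) (by linarith [add_one_le_exp u])
    calc pilaSlope u ≤ 1 * exp (-u) := mul_le_mul_of_nonneg_right hpoly (exp_pos _).le
      _ ≤ 0.3515 := by linarith
  nlinarith [sq_le_sq' hlow hup]

-- The cubic Taylor polynomial would not do: at `w = 0` the resulting bound on the sum of squares
-- is `2 (2 / (8 / 3))² = 1.125 > 1.06²`.
noncomputable def expTaylor4 (u : ℝ) : ℝ := 1 + u + u ^ 2 / 2 + u ^ 3 / 6 + u ^ 4 / 24

theorem expTaylor4_pos {u : ℝ} (hu : 0 ≤ u) : 0 < expTaylor4 u := by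
  rw [expTaylor4]; positivity

theorem expTaylor4_le_exp {u : ℝ} (hu : 0 ≤ u) : expTaylor4 u ≤ exp u := by
  convert sum_le_exp_of_nonneg hu 5 using 1
  simp [expTaylor4, Finset.sum_range_succ, Nat.factorial]

theorem sq_pilaSlope_le_div {u : ℝ} (h0 : 0 ≤ u) (h2 : u ≤ 2) :
    pilaSlope u ^ 2 ≤ (pilaSlopePoly u / expTaylor4 u) ^ 2 := by
  have hP : 0 ≤ pilaSlopePoly u := by
    rw [pilaSlopePoly]; nlinarith [mul_nonneg (sq_nonneg u) (by linarith : (0 : ℝ) ≤ 2 - u)]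
  have hE : exp (-u) ≤ 1 / expTaylor4 u := by
    rw [exp_neg, inv_eq_one_div]
    exact one_div_le_one_div_of_le (expTaylor4_pos h0) (expTaylor4_le_exp h0)
  rw [div_eq_mul_one_div]
  exact pow_le_pow_left₀ (mul_nonneg hP (exp_pos _).le) (mul_le_mul_of_nonneg_left hE hP) 2

theorem pilaSlopePoly_expTaylor4_bound {w : ℝ} (hw : w ^ 2 ≤ 1) :
    pilaSlopePoly (1 - w) ^ 2 * expTaylor4 (1 + w) ^ 2
        + pilaSlopePoly (1 + w) ^ 2 * expTaylor4 (1 - w) ^ 2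
      ≤ 1.06 ^ 2 * (expTaylor4 (1 - w) * expTaylor4 (1 + w)) ^ 2 := by
  simp only [pilaSlopePoly, expTaylor4]
  -- both sides are even in `w`; the difference is a polynomial in `w²` positive on `[0, 1]`
  have hz : 0 ≤ w ^ 2 := sq_nonneg w
  have h1 : 0 ≤ 1 - w ^ 2 := by linarith
  nlinarith [mul_nonneg hz h1, mul_nonneg (mul_nonneg hz hz) h1, pow_nonneg hz 3,
    pow_nonneg hz 4, mul_nonneg (pow_nonneg hz 3) h1, mul_nonneg (pow_nonneg hz 4) h1,
    mul_nonneg (pow_nonneg hz 5) h1, mul_nonneg (pow_nonneg hz 6) h1, mul_nonneg (pow_nonneg hz 7) h1]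

theorem sq_pilaSlope_one_sub_add_sq_pilaSlope_one_add_le {w : ℝ} (hw : |w| ≤ 1) :
    pilaSlope (1 - w) ^ 2 + pilaSlope (1 + w) ^ 2 ≤ 1.06 ^ 2 := by
  obtain ⟨hw₁, hw₂⟩ := abs_le.1 hw
  have ha := expTaylor4_pos (u := 1 - w) (by linarith)
  have hb := expTaylor4_pos (u := 1 + w) (by linarith)
  refine (add_le_add (sq_pilaSlope_le_div (by linarith) (by linarith))
    (sq_pilaSlope_le_div (by linarith) (by linarith))).trans ?_
  rw [div_pow, div_pow, div_add_div _ _ (by positivity) (by positivity),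
    div_le_iff₀ (by positivity)]
  linarith [pilaSlopePoly_expTaylor4_bound (sq_le_one_iff_abs_le_one w |>.2 hw)]

theorem sq_pilaDeriv_add_sq_pilaDeriv_le (x : ℝ) :
    pilaDeriv 5 (x - 0.2) ^ 2 + pilaDeriv 5 (-x - 0.2) ^ 2 ≤ 1.06 ^ 2 := by
  have tail : ∀ y : ℝ, 0.2 ≤ y →
      pilaDeriv 5 (y - 0.2) ^ 2 + pilaDeriv 5 (-y - 0.2) ^ 2 ≤ 1.06 ^ 2 := by
    intro y hy
    rw [pilaDeriv, if_pos (by linarith), pilaDeriv, if_neg (by linarith)]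
    linarith [sq_pilaSlope_le_of_two_le (u := -(5 * (-y - 0.2))) (by linarith)]
  rcases le_or_gt 0.2 x with hx | hx
  · exact tail x hx
  rcases le_or_gt x (-0.2) with hx' | hx'
  · linarith [neg_neg x ▸ tail (-x) (by linarith)]
  rw [pilaDeriv, if_neg (by linarith), pilaDeriv, if_neg (by linarith)]
  convert sq_pilaSlope_one_sub_add_sq_pilaSlope_one_add_le (w := 5 * x)
    (abs_le.2 ⟨by linarith, by linarith⟩) using 4 <;> linarith

noncomputable def cpilaDeriv (x : ℝ) : EuclideanSpace ℝ (Fin 2) :=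
  (1 / 1.06 : ℝ) •
    (WithLp.equiv 2 (Fin 2 → ℝ)).symm ![pilaDeriv 5 (x - 0.2), -pilaDeriv 5 (-x - 0.2)]

theorem hasDerivAt_cpila (x : ℝ) : HasDerivAt CPila (cpilaDeriv x) x := by
  have h₁ : HasDerivAt (fun y => Pila 5 (y - 0.2)) (pilaDeriv 5 (x - 0.2)) x := by
    simpa using (hasDerivAt_pila 5 (x - 0.2)).comp_sub_const x 0.2
  have h₂ : HasDerivAt (fun y => Pila 5 (-y - 0.2)) (-pilaDeriv 5 (-x - 0.2)) x := by
    exact ((hasDerivAt_pila 5 (-x - 0.2)).comp x ((hasDerivAt_neg x).sub_const 0.2)).congr_deriv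
      (mul_neg_one _)
  have hpi : HasDerivAt (fun y => ![Pila 5 (y - 0.2), Pila 5 (-y - 0.2)])
      ![pilaDeriv 5 (x - 0.2), -pilaDeriv 5 (-x - 0.2)] x := by
    refine hasDerivAt_pi.2 fun i => ?_
    fin_cases i
    exacts [h₁, h₂]
  exact ((EuclideanSpace.equiv (Fin 2) ℝ).symm.hasFDerivAt.comp_hasDerivAt x hpi).const_smul
    (1 / 1.06 : ℝ)

theorem norm_cpilaDeriv_le (x : ℝ) : ‖cpilaDeriv x‖ ≤ 1 := by
  have hv : ‖(WithLp.equiv 2 (Fin 2 → ℝ)).symm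
      ![pilaDeriv 5 (x - 0.2), -pilaDeriv 5 (-x - 0.2)]‖ ≤ 1.06 := by
    rw [EuclideanSpace.norm_eq, Fin.sum_univ_two]
    refine sqrt_le_iff.2 ⟨by norm_num, ?_⟩
    simpa using sq_pilaDeriv_add_sq_pilaDeriv_le x
  rw [cpilaDeriv, norm_smul, norm_of_nonneg (by norm_num)]
  calc 1 / 1.06 * _ ≤ (1 / 1.06 : ℝ) * 1.06 := by gcongr
    _ = 1 := by norm_num

/-- CPila is 1-Lipschitz for the Euclidean norm on `ℝ²`. -/
theorem cpila_one_lipschitz : ∀ x y : ℝ, ‖CPila x - CPila y‖ ≤ |x - y| := by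
  intro x y
  simpa [Real.norm_eq_abs] using convex_univ.norm_image_sub_le_of_norm_hasDerivWithin_le
    (fun z _ => (hasDerivAt_cpila z).hasDerivWithinAt) (fun z _ => norm_cpilaDeriv_le z)
    (mem_univ y) (mem_univ x)
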